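/- arXiv:math/0605266 — 5 statements merged into one kernel-verified Lean document; each statement's English description precedes it below -/
import Mathlib

section
/- Let v : (0,∞) → ℝ be a nonnegative, nondecreasing function and let β > 0. Suppose there exist c₂ < ∞ and t₀ > 0 with v(t) ≤ c₂ t^β for all t > t₀, and there exist c₃ > 0 and λ₀ > 0 with ∫₀^∞ e^{−λt} v(t) dt ≥ c₃ λ^{−(1+β)} for all 0 < λ < λ₀. Then there exist c₄ > 0 and t₁ < ∞ such that v(t) ≥ c₄ t^β for all t > t₁. -/
open MeasureTheory Real Set

private lemma aux_rpow_le_exp {β : ℝ} (hβ : 0 ≤ β) :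
    ∃ C : ℝ, 1 ≤ C ∧ ∀ x : ℝ, 0 ≤ x → x ^ β ≤ C * Real.exp (x / 2) := by
  set n := Nat.ceil β with hn
  have hf1 : (1 : ℝ) ≤ (Nat.factorial n : ℝ) := by exact_mod_cast Nat.factorial_pos n
  have hp1 : (1 : ℝ) ≤ 2 ^ n := one_le_pow₀ (by norm_num)
  have hC1 : (1 : ℝ) ≤ (Nat.factorial n : ℝ) * 2 ^ n := by nlinarith
  refine ⟨(Nat.factorial n : ℝ) * 2 ^ n, hC1, fun x hx => ?_⟩
  have hexp1 : 1 ≤ Real.exp (x / 2) := Real.one_le_exp (by linarith)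
  rcases le_total x 1 with hx1 | hx1
  · have h0 : x ^ β ≤ 1 := Real.rpow_le_one hx hx1 hβ
    nlinarith
  · have h1 : x ^ β ≤ x ^ (n : ℝ) := Real.rpow_le_rpow_of_exponent_le hx1 (Nat.le_ceil β)
    rw [Real.rpow_natCast] at h1
    have h2 : (x / 2) ^ n / (Nat.factorial n : ℝ) ≤ Real.exp (x / 2) :=
      Real.pow_div_factorial_le_exp (x / 2) (by linarith) n
    have hfpos : (0 : ℝ) < (Nat.factorial n : ℝ) := by exact_mod_cast Nat.factorial_pos n
    have h4 : (x / 2) ^ n ≤ (Nat.factorial n : ℝ) * Real.exp (x / 2) := by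
      rw [div_le_iff₀ hfpos] at h2; linarith
    have h3 : x ^ n = (x / 2) ^ n * 2 ^ n := by
      rw [div_pow]; field_simp
    calc x ^ β ≤ x ^ n := h1
      _ = (x / 2) ^ n * 2 ^ n := h3
      _ ≤ (Nat.factorial n : ℝ) * Real.exp (x / 2) * 2 ^ n := by
          exact mul_le_mul_of_nonneg_right h4 (by positivity)
      _ = (Nat.factorial n : ℝ) * 2 ^ n * Real.exp (x / 2) := by ring

private lemma aux_lintegral_exp (a : ℝ) {m : ℝ} (hm : 0 < m) :
    ∫⁻ s in Ioi a, ENNReal.ofReal (Real.exp (-m * s)) =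
      ENNReal.ofReal (Real.exp (-m * a) / m) := by
  rw [← ofReal_integral_eq_lintegral_ofReal (exp_neg_integrableOn_Ioi a hm)
      (Filter.Eventually.of_forall fun x => (Real.exp_pos _).le)]
  congr 1
  have h := integral_comp_mul_left_Ioi (fun x => Real.exp (-x)) a hm
  simp only [smul_eq_mul, integral_exp_neg_Ioi] at h
  simp only [neg_mul]
  rw [h, div_eq_inv_mul]

/-- Tauberian lower bound (case `α = β`): if `v` is nonnegative and nondecreasing on `(0,∞)`,
satisfies the pointwise upper bound `v(t) ≤ c₂ t^β` for `t > t₀`, and its Laplace transform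
satisfies `∫₀^∞ e^{-λt} v(t) dt ≥ c₃ λ^{-(1+β)}` for all `0 < λ < λ₀`, then `v(t) ≥ c₄ t^β`
for all `t > t₁`. -/
theorem tauberian_lower_eq (v : ℝ → ℝ) (β : ℝ) (hβ : 0 < β)
    (hnonneg : ∀ t, 0 < t → 0 ≤ v t)
    (hmono : ∀ s t, 0 < s → s ≤ t → v s ≤ v t)
    (c₂ t₀ : ℝ) (ht₀ : 0 < t₀)
    (hupper : ∀ t, t₀ < t → v t ≤ c₂ * t ^ β)
    (c₃ lam₀ : ℝ) (hc₃ : 0 < c₃) (hlam₀ : 0 < lam₀)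
    (hLap : ∀ lam : ℝ, 0 < lam → lam < lam₀ →
      ENNReal.ofReal (c₃ * lam ^ (-(1 + β)))
        ≤ ∫⁻ t in Ioi (0 : ℝ), ENNReal.ofReal (Real.exp (-lam * t) * v t)) :
    ∃ c₄ t₁ : ℝ, 0 < c₄ ∧ ∀ t, t₁ < t → c₄ * t ^ β ≤ v t := by
  obtain ⟨C, hC1, hC⟩ := aux_rpow_le_exp hβ.le
  have hC0 : (0 : ℝ) < C := lt_of_lt_of_le one_pos hC1
  set c : ℝ := max c₂ 1 with hcdef
  have hc0 : (0 : ℝ) < c := lt_of_lt_of_le one_pos (le_max_right _ _)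
  have hupper' : ∀ t, t₀ < t → v t ≤ c * t ^ β := fun t ht =>
    le_trans (hupper t ht)
      (mul_le_mul_of_nonneg_right (le_max_left _ _)
        (Real.rpow_nonneg (le_of_lt (ht₀.trans ht)) β))
  set A : ℝ := max 1 (2 * Real.log (8 * c * C / c₃)) with hAdef
  have hA1 : (1 : ℝ) ≤ A := le_max_left _ _
  have hA0 : (0 : ℝ) < A := lt_of_lt_of_le one_pos hA1
  have h8 : (0 : ℝ) < 8 * c * C / c₃ := by positivity
  have hAexp : 2 * c * C * Real.exp (-(A / 2)) ≤ c₃ / 2 := by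
    have hlog : Real.log (8 * c * C / c₃) ≤ A / 2 := by
      have := le_max_right 1 (2 * Real.log (8 * c * C / c₃))
      linarith
    have h1 : Real.exp (-(A / 2)) ≤ c₃ / (8 * c * C) := by
      have h2 : 8 * c * C / c₃ ≤ Real.exp (A / 2) := by
        have := Real.exp_le_exp.mpr hlog
        rwa [Real.exp_log h8] at this
      rw [Real.exp_neg]
      calc (Real.exp (A / 2))⁻¹ ≤ (8 * c * C / c₃)⁻¹ := by
            apply inv_anti₀ h8 h2
        _ = c₃ / (8 * c * C) := inv_div _ _
    have h3 : 2 * c * C * Real.exp (-(A / 2)) ≤ 2 * c * C * (c₃ / (8 * c * C)) :=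
      mul_le_mul_of_nonneg_left h1 (by positivity)
    have h4 : 2 * c * C * (c₃ / (8 * c * C)) = c₃ / 4 := by
      field_simp
      ring
    rw [h4] at h3
    linarith
  refine ⟨c₃ / (2 * A ^ β), max t₀ (A / lam₀), by positivity, fun t ht => ?_⟩
  have ht0' : t₀ < t := lt_of_le_of_lt (le_max_left _ _) ht
  have ht0 : (0 : ℝ) < t := ht₀.trans ht0'
  set lam : ℝ := A / t with hlamdef
  have hlam0 : (0 : ℝ) < lam := by positivity
  have hlamlt : lam < lam₀ := by
    have h1 : A / lam₀ < t := lt_of_le_of_lt (le_max_right _ _) ht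
    rw [hlamdef, div_lt_iff₀ ht0]
    rw [div_lt_iff₀ hlam₀] at h1
    linarith [h1]
  have hlamt : lam * t = A := div_mul_cancel₀ A ht0.ne'
  have hrpowβ : (0 : ℝ) < lam ^ β := Real.rpow_pos_of_pos hlam0 β
  have hmeas : Measurable fun s : ℝ => ENNReal.ofReal (Real.exp (-lam * s)) :=
    (Real.measurable_exp.comp ((measurable_id.const_mul (-lam)))).ennreal_ofReal
  -- split the integral
  have hsplit : (∫⁻ s in Ioi (0 : ℝ), ENNReal.ofReal (Real.exp (-lam * s) * v s)) =
      (∫⁻ s in Ioc (0 : ℝ) t, ENNReal.ofReal (Real.exp (-lam * s) * v s)) +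
        ∫⁻ s in Ioi t, ENNReal.ofReal (Real.exp (-lam * s) * v s) := by
    rw [← Ioc_union_Ioi_eq_Ioi ht0.le,
      lintegral_union measurableSet_Ioi Ioc_disjoint_Ioi_same]
  -- head bound
  have hhead : (∫⁻ s in Ioc (0 : ℝ) t, ENNReal.ofReal (Real.exp (-lam * s) * v s)) ≤
      ENNReal.ofReal (v t / lam) := by
    calc (∫⁻ s in Ioc (0 : ℝ) t, ENNReal.ofReal (Real.exp (-lam * s) * v s))
        ≤ ∫⁻ s in Ioc (0 : ℝ) t,
            ENNReal.ofReal (Real.exp (-lam * s)) * ENNReal.ofReal (v t) := by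
          refine setLIntegral_mono' measurableSet_Ioc fun s hs => ?_
          rw [← ENNReal.ofReal_mul (Real.exp_pos _).le]
          exact ENNReal.ofReal_le_ofReal
            (mul_le_mul_of_nonneg_left (hmono s t hs.1 hs.2) (Real.exp_pos _).le)
      _ = (∫⁻ s in Ioc (0 : ℝ) t, ENNReal.ofReal (Real.exp (-lam * s)))
            * ENNReal.ofReal (v t) := lintegral_mul_const _ hmeas
      _ ≤ (∫⁻ s in Ioi (0 : ℝ), ENNReal.ofReal (Real.exp (-lam * s)))
            * ENNReal.ofReal (v t) :=
          mul_le_mul_left (lintegral_mono_set Ioc_subset_Ioi_self) _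
      _ = ENNReal.ofReal (Real.exp (-lam * 0) / lam) * ENNReal.ofReal (v t) := by
          rw [aux_lintegral_exp 0 hlam0]
      _ = ENNReal.ofReal (v t / lam) := by
          rw [mul_zero, Real.exp_zero, ← ENNReal.ofReal_mul (by positivity)]
          congr 1
          ring
  -- tail bound
  have htail : (∫⁻ s in Ioi t, ENNReal.ofReal (Real.exp (-lam * s) * v s)) ≤
      ENNReal.ofReal (c₃ / 2 * lam ^ (-(1 + β))) := by
    have hpt : ∀ s ∈ Ioi t, ENNReal.ofReal (Real.exp (-lam * s) * v s) ≤
        ENNReal.ofReal (c * C / lam ^ β) * ENNReal.ofReal (Real.exp (-(lam / 2) * s)) := by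
      intro s hs
      have hst : t < s := hs
      have hs0 : (0 : ℝ) < s := ht0.trans hst
      have hv : v s ≤ c * s ^ β := hupper' s (ht0'.trans hst)
      have hxb : (lam * s) ^ β ≤ C * Real.exp (lam * s / 2) := hC (lam * s) (by positivity)
      rw [Real.mul_rpow hlam0.le hs0.le] at hxb
      have hsb : s ^ β ≤ C * Real.exp (lam * s / 2) / lam ^ β := by
        rw [le_div_iff₀ hrpowβ]
        nlinarith [hxb]
      have hvs : v s ≤ c * (C * Real.exp (lam * s / 2) / lam ^ β) :=
        hv.trans (mul_le_mul_of_nonneg_left hsb hc0.le)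
      have hkey : Real.exp (-lam * s) * v s ≤
          c * C / lam ^ β * Real.exp (-(lam / 2) * s) := by
        have h2 : Real.exp (-lam * s) * Real.exp (lam * s / 2) =
            Real.exp (-(lam / 2) * s) := by
          rw [← Real.exp_add]; congr 1; ring
        calc Real.exp (-lam * s) * v s
            ≤ Real.exp (-lam * s) * (c * (C * Real.exp (lam * s / 2) / lam ^ β)) :=
              mul_le_mul_of_nonneg_left hvs (Real.exp_pos _).le
          _ = c * C / lam ^ β * (Real.exp (-lam * s) * Real.exp (lam * s / 2)) := by
              ring
          _ = c * C / lam ^ β * Real.exp (-(lam / 2) * s) := by rw [h2]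
      rw [← ENNReal.ofReal_mul (by positivity)]
      exact ENNReal.ofReal_le_ofReal hkey
    calc (∫⁻ s in Ioi t, ENNReal.ofReal (Real.exp (-lam * s) * v s))
        ≤ ∫⁻ s in Ioi t, ENNReal.ofReal (c * C / lam ^ β)
            * ENNReal.ofReal (Real.exp (-(lam / 2) * s)) :=
          setLIntegral_mono' measurableSet_Ioi hpt
      _ = ENNReal.ofReal (c * C / lam ^ β)
            * ∫⁻ s in Ioi t, ENNReal.ofReal (Real.exp (-(lam / 2) * s)) :=
          lintegral_const_mul' _ _ ENNReal.ofReal_ne_top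
      _ = ENNReal.ofReal (c * C / lam ^ β)
            * ENNReal.ofReal (Real.exp (-(lam / 2) * t) / (lam / 2)) := by
          rw [aux_lintegral_exp t (half_pos hlam0)]
      _ ≤ ENNReal.ofReal (c₃ / 2 * lam ^ (-(1 + β))) := by
          rw [← ENNReal.ofReal_mul (by positivity)]
          apply ENNReal.ofReal_le_ofReal
          have he : Real.exp (-(lam / 2) * t) = Real.exp (-(A / 2)) := by
            congr 1
            rw [show -(lam / 2) * t = -(lam * t / 2) by ring, hlamt]
          rw [he]
          have hrw : c * C / lam ^ β * (Real.exp (-(A / 2)) / (lam / 2)) =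
              2 * c * C * Real.exp (-(A / 2)) * (1 / (lam * lam ^ β)) := by
            field_simp
          have hrp : lam ^ (-(1 + β)) = 1 / (lam * lam ^ β) := by
            rw [Real.rpow_neg hlam0.le, Real.rpow_add hlam0, Real.rpow_one, one_div]
          rw [hrw, hrp]
          exact mul_le_mul_of_nonneg_right hAexp (by positivity)
  -- combine
  have hsum : (∫⁻ s in Ioi (0 : ℝ), ENNReal.ofReal (Real.exp (-lam * s) * v s)) ≤
      ENNReal.ofReal (v t / lam) + ENNReal.ofReal (c₃ / 2 * lam ^ (-(1 + β))) := by
    rw [hsplit]; exact add_le_add hhead htail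
  have hcomb := (hLap lam hlam0 hlamlt).trans hsum
  have hvt0 : 0 ≤ v t := hnonneg t ht0
  rw [← ENNReal.ofReal_add (div_nonneg hvt0 hlam0.le) (by positivity)] at hcomb
  have hreal : c₃ * lam ^ (-(1 + β)) ≤ v t / lam + c₃ / 2 * lam ^ (-(1 + β)) :=
    (ENNReal.ofReal_le_ofReal_iff (by positivity)).mp hcomb
  have h5 : c₃ / 2 * lam ^ (-(1 + β)) ≤ v t / lam := by linarith
  have h6 : lam * (c₃ / 2 * lam ^ (-(1 + β))) ≤ v t := by
    have := mul_le_mul_of_nonneg_left h5 hlam0.le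
    rwa [mul_div_cancel₀ (v t) hlam0.ne'] at this
  have h7 : lam * lam ^ (-(1 + β)) = lam ^ (-β) := by
    rw [show (-β : ℝ) = 1 + -(1 + β) by ring, Real.rpow_add hlam0, Real.rpow_one]
  have h8' : lam ^ (-β) = t ^ β / A ^ β := by
    rw [hlamdef, Real.rpow_neg (by positivity), Real.div_rpow hA0.le ht0.le, inv_div]
  have h9 : lam * (c₃ / 2 * lam ^ (-(1 + β))) = c₃ / (2 * A ^ β) * t ^ β := by
    rw [show lam * (c₃ / 2 * lam ^ (-(1 + β))) = c₃ / 2 * (lam * lam ^ (-(1 + β))) by ring,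
      h7, h8']
    field_simp
  linarith [h6, h9.symm.le]
end

section
/- Let v : (0,∞) → ℝ be a nonnegative, nondecreasing function and let 0 < β < α. Suppose there exist c₂ < ∞ and t₀ > 0 with v(t) ≤ c₂ t^α for all t > t₀, and there exist c₃ > 0 and λ₀ > 0 with ∫₀^∞ e^{−λt} v(t) dt ≥ c₃ λ^{−(1+β)} for all 0 < λ < λ₀. Then there exist c₄ > 0 and t₁ < ∞ such that v(t) ≥ c₄ t^β (log t)^{−(1+β)} for all t > t₁. -/
set_option maxHeartbeats 1000000


open MeasureTheory Real Set

lemma exp_lint (a : ℝ) {b : ℝ} (hb : 0 < b) :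
    ∫⁻ t in Ioi a, ENNReal.ofReal (Real.exp (-b * t)) = ENNReal.ofReal (Real.exp (-b * a) / b) := by
  rw [← ofReal_integral_eq_lintegral_ofReal (exp_neg_integrableOn_Ioi a hb)
    (Filter.Eventually.of_forall fun t => (Real.exp_pos _).le)]
  congr 1
  have := integral_comp_mul_left_Ioi (fun x => Real.exp (-x)) a hb
  simp only [smul_eq_mul] at this
  rw [show (fun t => Real.exp (-b * t)) = fun t => Real.exp (-(b * t)) by ext t; ring_nf]
  rw [this, integral_exp_neg_Ioi]
  rw [div_eq_inv_mul, neg_mul]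

lemma aux_Mbd {α lam t : ℝ} (hα : 0 < α) (hlam : 0 < lam) (ht : 0 < t) :
    t ^ α ≤ Real.exp (α * (Real.log (2*α) - 1)) * lam ^ (-α) * Real.exp (lam*t/2) := by
  have hs : (0:ℝ) < 2*α/lam := by positivity
  have hlog : Real.log (t / (2*α/lam)) ≤ t / (2*α/lam) - 1 :=
    Real.log_le_sub_one_of_pos (by positivity)
  rw [Real.log_div ht.ne' hs.ne'] at hlog
  have key : α * Real.log t ≤ α*(Real.log (2*α) - 1) + (-α) * Real.log lam + lam*t/2 := by
    have h2 : Real.log (2*α/lam) = Real.log (2*α) - Real.log lam :=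
      Real.log_div (by positivity) hlam.ne'
    have h3 : t / (2*α/lam) = lam * t / (2*α) := by field_simp
    rw [h2, h3] at hlog
    have := mul_le_mul_of_nonneg_left hlog hα.le
    have h4 : α * (lam * t / (2*α)) = lam * t / 2 := by field_simp
    nlinarith [this]
  calc t ^ α = Real.exp (Real.log t * α) := Real.rpow_def_of_pos ht α
    _ ≤ Real.exp (α*(Real.log (2*α) - 1) + (-α) * Real.log lam + lam*t/2) := by
        apply Real.exp_le_exp.mpr; linarith [key]
    _ = Real.exp (α*(Real.log (2*α) - 1)) * lam ^ (-α) * Real.exp (lam*t/2) := by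
        rw [Real.exp_add, Real.exp_add, Real.rpow_def_of_pos hlam]
        ring_nf

lemma key_est (v : ℝ → ℝ) (α β : ℝ) (hβ : 0 < β) (hαβ : β < α)
    (hnonneg : ∀ t, 0 < t → 0 ≤ v t)
    (hmono : ∀ s t, 0 < s → s ≤ t → v s ≤ v t)
    (c₂ t₀ : ℝ) (ht₀ : 0 < t₀)
    (hupper : ∀ t, t₀ < t → v t ≤ c₂ * t ^ α)
    (c₃ lam₀ : ℝ) (hc₃ : 0 < c₃) (hlam₀ : 0 < lam₀)
    (hLap : ∀ lam : ℝ, 0 < lam → lam < lam₀ →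
      ENNReal.ofReal (c₃ * lam ^ (-(1 + β)))
        ≤ ∫⁻ t in Ioi (0 : ℝ), ENNReal.ofReal (Real.exp (-lam * t) * v t)) :
    ∃ lam₁ : ℝ, 0 < lam₁ ∧ lam₁ ≤ 1/2 ∧ ∀ lam, 0 < lam → lam ≤ lam₁ →
      c₃/2 * lam ^ (-β) ≤ v ((2*(α+β+2))/lam * Real.log lam⁻¹) := by
  have hα : 0 < α := hβ.trans hαβ
  set K := 2*(α+β+2) with hK
  have hKpos : (0:ℝ) < K := by rw [hK]; positivity
  have hc₂ : 0 ≤ c₂ := by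
    have h1 := hupper (t₀+1) (by linarith)
    have h2 := hnonneg (t₀+1) (by linarith)
    have h3 : (0:ℝ) < (t₀+1)^α := Real.rpow_pos_of_pos (by linarith) α
    nlinarith
  set D := c₂ * (t₀+1)^α with hD
  have hDpos : 0 ≤ D := by
    have h3 : (0:ℝ) ≤ (t₀+1)^α := (Real.rpow_pos_of_pos (by linarith) α).le
    exact mul_nonneg hc₂ h3
  have hglob : ∀ t, 0 < t → v t ≤ D + c₂ * t ^ α := by
    intro t ht
    have htα : (0:ℝ) ≤ c₂ * t ^ α := mul_nonneg hc₂ (Real.rpow_pos_of_pos ht α).le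
    rcases le_or_gt t t₀ with h | h
    · have h1 : v t ≤ v (t₀+1) := hmono t (t₀+1) ht (by linarith)
      have h2 := hupper (t₀+1) (by linarith)
      rw [← hD] at h2
      linarith
    · linarith [hupper t h]
  set CM := Real.exp (α*(Real.log (2*α) - 1)) with hCM
  have hCMpos : 0 < CM := Real.exp_pos _
  set G := 2*D + 2*c₂*CM + 1 with hG
  have hGpos : 0 < G := by nlinarith [mul_nonneg hc₂ hCMpos.le]
  set lam₁ := min (min (lam₀/2) (1/2)) ((c₃/(2*G)) ^ ((2*β+2)⁻¹)) with hlam₁def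
  have hcG : 0 < c₃/(2*G) := by positivity
  have hlam₁pos : 0 < lam₁ := by
    apply lt_min (lt_min (by linarith) (by norm_num))
    exact Real.rpow_pos_of_pos hcG _
  refine ⟨lam₁, hlam₁pos, (min_le_left _ _).trans (min_le_right _ _), ?_⟩
  intro lam hlam hlamle
  have hlamhalf : lam ≤ 1/2 := hlamle.trans ((min_le_left _ _).trans (min_le_right _ _))
  have hlam1 : lam < 1 := by linarith
  have hlam0' : lam < lam₀ :=
    lt_of_le_of_lt (hlamle.trans ((min_le_left _ _).trans (min_le_left _ _))) (by linarith)
  have hloginv : 0 < Real.log lam⁻¹ := by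
    rw [Real.log_inv]; linarith [Real.log_neg hlam hlam1]
  set T := K/lam * Real.log lam⁻¹ with hT
  have hTpos : 0 < T := mul_pos (div_pos hKpos hlam) hloginv
  have hvT : 0 ≤ v T := hnonneg T hTpos
  set E := D + c₂ * CM * lam ^ (-α) with hE
  have hEpos : 0 ≤ E := by
    have : (0:ℝ) ≤ c₂ * CM * lam ^ (-α) :=
      mul_nonneg (mul_nonneg hc₂ hCMpos.le) (Real.rpow_pos_of_pos hlam _).le
    linarith
  have hmeas1 : Measurable fun t : ℝ => ENNReal.ofReal (Real.exp (-lam * t) * v T) :=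
    ENNReal.measurable_ofReal.comp
      ((Real.measurable_exp.comp (measurable_id.const_mul (-lam))).mul_const (v T))
  have hmeas2 : Measurable fun t : ℝ => ENNReal.ofReal (Real.exp (-lam * t)) :=
    ENNReal.measurable_ofReal.comp (Real.measurable_exp.comp (measurable_id.const_mul (-lam)))
  have hmeas3 : Measurable fun t : ℝ => ENNReal.ofReal (E * Real.exp (-(lam/2) * t)) :=
    ENNReal.measurable_ofReal.comp
      ((Real.measurable_exp.comp (measurable_id.const_mul (-(lam/2)))).const_mul E)
  have hmeas4 : Measurable fun t : ℝ => ENNReal.ofReal (Real.exp (-(lam/2) * t)) :=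
    ENNReal.measurable_ofReal.comp (Real.measurable_exp.comp (measurable_id.const_mul (-(lam/2))))
  have hsplit : ∫⁻ t in Ioi (0:ℝ), ENNReal.ofReal (Real.exp (-lam * t) * v t)
      = (∫⁻ t in Ioc 0 T, ENNReal.ofReal (Real.exp (-lam * t) * v t))
        + ∫⁻ t in Ioi T, ENNReal.ofReal (Real.exp (-lam * t) * v t) := by
    rw [← Ioc_union_Ioi_eq_Ioi hTpos.le,
      lintegral_union measurableSet_Ioi (Ioc_disjoint_Ioi le_rfl)]
  have hI1 : (∫⁻ t in Ioc 0 T, ENNReal.ofReal (Real.exp (-lam * t) * v t))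
      ≤ ENNReal.ofReal (1/lam * v T) := by
    calc ∫⁻ t in Ioc 0 T, ENNReal.ofReal (Real.exp (-lam * t) * v t)
        ≤ ∫⁻ t in Ioc 0 T, ENNReal.ofReal (Real.exp (-lam * t) * v T) := by
          apply setLIntegral_mono hmeas1
          intro t ht
          exact ENNReal.ofReal_le_ofReal
            (mul_le_mul_of_nonneg_left (hmono t T ht.1 ht.2) (Real.exp_pos _).le)
      _ ≤ ∫⁻ t in Ioi 0, ENNReal.ofReal (Real.exp (-lam * t) * v T) :=
          lintegral_mono_set Ioc_subset_Ioi_self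
      _ = ENNReal.ofReal (1/lam * v T) := by
          simp_rw [ENNReal.ofReal_mul (Real.exp_pos _).le]
          rw [lintegral_mul_const'' _ hmeas2.aemeasurable, exp_lint 0 hlam,
            ← ENNReal.ofReal_mul (by positivity)]
          norm_num
  have hptws : ∀ t ∈ Ioi T, Real.exp (-lam * t) * v t ≤ E * Real.exp (-(lam/2) * t) := by
    intro t ht
    have ht' : 0 < t := hTpos.trans ht
    have h1 : v t ≤ D + c₂ * t ^ α := hglob t ht'
    have h2 : t ^ α ≤ CM * lam^(-α) * Real.exp (lam*t/2) := aux_Mbd hα hlam ht'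
    have hexp : Real.exp (-lam*t) * Real.exp (lam*t/2) = Real.exp (-(lam/2)*t) := by
      rw [← Real.exp_add]; ring_nf
    have hexple : Real.exp (-lam*t) ≤ Real.exp (-(lam/2)*t) := by
      apply Real.exp_le_exp.mpr; nlinarith
    calc Real.exp (-lam*t) * v t ≤ Real.exp (-lam*t) * (D + c₂ * t^α) :=
          mul_le_mul_of_nonneg_left h1 (Real.exp_pos _).le
      _ = D * Real.exp (-lam*t) + c₂ * t^α * Real.exp (-lam*t) := by ring
      _ ≤ D * Real.exp (-(lam/2)*t)
          + c₂ * (CM * lam^(-α) * Real.exp (lam*t/2)) * Real.exp (-lam*t) := by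
          gcongr
      _ = E * Real.exp (-(lam/2)*t) := by rw [hE, ← hexp]; ring
  have hI2 : (∫⁻ t in Ioi T, ENNReal.ofReal (Real.exp (-lam * t) * v t))
      ≤ ENNReal.ofReal (E * (Real.exp (-(lam/2) * T) / (lam/2))) := by
    calc ∫⁻ t in Ioi T, ENNReal.ofReal (Real.exp (-lam * t) * v t)
        ≤ ∫⁻ t in Ioi T, ENNReal.ofReal (E * Real.exp (-(lam/2) * t)) := by
          apply setLIntegral_mono hmeas3
          intro t ht; exact ENNReal.ofReal_le_ofReal (hptws t ht)
      _ = ENNReal.ofReal E * ∫⁻ t in Ioi T, ENNReal.ofReal (Real.exp (-(lam/2) * t)) := by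
          simp_rw [ENNReal.ofReal_mul hEpos]
          rw [lintegral_const_mul'' _ hmeas4.aemeasurable]
      _ = ENNReal.ofReal (E * (Real.exp (-(lam/2) * T) / (lam/2))) := by
          rw [exp_lint T (by positivity), ← ENNReal.ofReal_mul hEpos]
  have hcomb : ENNReal.ofReal (c₃ * lam ^ (-(1+β)))
      ≤ ENNReal.ofReal (1/lam * v T) + ENNReal.ofReal (E * (Real.exp (-(lam/2) * T) / (lam/2))) :=
    le_trans (hLap lam hlam hlam0') (by rw [hsplit]; exact add_le_add hI1 hI2)
  rw [← ENNReal.ofReal_add (mul_nonneg (by positivity) hvT)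
    (mul_nonneg hEpos (by positivity))] at hcomb
  have hreal : c₃ * lam ^ (-(1+β)) ≤ 1/lam * v T + E * (Real.exp (-(lam/2)*T)/(lam/2)) :=
    (ENNReal.ofReal_le_ofReal_iff (by positivity)).mp hcomb
  -- identify the exponential
  have hexpT : Real.exp (-(lam/2) * T) = lam ^ (K/2) := by
    have harg : -(lam/2) * T = Real.log lam * (K/2) := by
      rw [hT, Real.log_inv]; field_simp
    rw [harg, Real.rpow_def_of_pos hlam]
  -- bound the tail term B
  have hBeq : E * (lam ^ (K/2) / (lam/2))
      = (2*D*lam^(α+2*β+2) + 2*c₂*CM*lam^(2*β+2)) * lam^(-(1+β)) := by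
    rw [hE]
    rw [show (2*D*lam^(α+2*β+2) + 2*c₂*CM*lam^(2*β+2)) * lam^(-(1+β))
        = 2*D*(lam^(α+2*β+2)*lam^(-(1+β))) + 2*c₂*CM*(lam^(2*β+2)*lam^(-(1+β))) by ring]
    rw [← Real.rpow_add hlam, ← Real.rpow_add hlam]
    have e1 : α+2*β+2 + -(1+β) = α+β+1 := by ring
    have e2 : 2*β+2 + -(1+β) = β+1 := by ring
    rw [e1, e2]
    have e3 : lam ^ (K/2) = lam ^ (α+β+1) * lam := by
      rw [← Real.rpow_add_one hlam.ne']
      congr 1; rw [hK]; ring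
    have e4 : lam ^ (-α) * lam ^ (α+β+1) = lam ^ (β+1) := by
      rw [← Real.rpow_add hlam]; congr 1; ring
    rw [e3]
    rw [mul_div_assoc, show lam/(lam/2) = 2 by
      rw [div_div_eq_mul_div, mul_comm, mul_div_assoc, div_self hlam.ne']; ring]
    linear_combination (2*c₂*CM) * e4
  have hBle : E * (Real.exp (-(lam/2)*T)/(lam/2)) ≤ c₃/2 * lam ^ (-(1+β)) := by
    rw [hexpT, hBeq]
    have hlampow : (0:ℝ) ≤ lam ^ (-(1+β)) := (Real.rpow_pos_of_pos hlam _).le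
    apply mul_le_mul_of_nonneg_right _ hlampow
    have h1 : lam^(α+2*β+2) ≤ lam^(2*β+2) :=
      Real.rpow_le_rpow_of_exponent_ge hlam (by linarith) (by linarith)
    have h2 : lam^(2*β+2) ≤ lam₁^(2*β+2) :=
      Real.rpow_le_rpow hlam.le hlamle (by linarith)
    have h3 : lam₁^(2*β+2) ≤ c₃/(2*G) := by
      calc lam₁^(2*β+2) ≤ ((c₃/(2*G)) ^ ((2*β+2)⁻¹))^(2*β+2) :=
            Real.rpow_le_rpow hlam₁pos.le (min_le_right _ _) (by linarith)
        _ = c₃/(2*G) := by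
            rw [← Real.rpow_mul hcG.le,
              inv_mul_cancel₀ (ne_of_gt (by linarith : (0:ℝ) < 2*β+2)), Real.rpow_one]
    have hpow0 : (0:ℝ) ≤ lam^(2*β+2) := (Real.rpow_pos_of_pos hlam _).le
    have hpow0' : (0:ℝ) ≤ lam^(α+2*β+2) := (Real.rpow_pos_of_pos hlam _).le
    have hcCM : (0:ℝ) ≤ 2*c₂*CM := by positivity
    calc 2*D*lam^(α+2*β+2) + 2*c₂*CM*lam^(2*β+2)
        ≤ G * lam^(2*β+2) := by rw [hG]; nlinarith
      _ ≤ G * (c₃/(2*G)) := by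
          apply mul_le_mul_of_nonneg_left _ hGpos.le
          exact le_trans h2 h3
      _ = c₃/2 := by field_simp
  -- conclude
  have hfinal : c₃/2 * lam ^ (-(1+β)) ≤ 1/lam * v T := by linarith
  have := mul_le_mul_of_nonneg_right hfinal hlam.le
  have hsimp : 1/lam * v T * lam = v T := by field_simp
  rw [hsimp] at this
  calc c₃/2 * lam ^ (-β) = c₃/2 * lam ^ (-(1+β)) * lam := by
        rw [mul_assoc, ← Real.rpow_add_one hlam.ne']
        congr 2; ring
    _ ≤ v T := this

/-- Tauberian lower bound (case `α > β`): if `v` is nonnegative and nondecreasing on `(0,∞)`,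
satisfies the pointwise upper bound `v(t) ≤ c₂ t^α` for `t > t₀`, and its Laplace transform
satisfies `∫₀^∞ e^{-λt} v(t) dt ≥ c₃ λ^{-(1+β)}` for all `0 < λ < λ₀`, then
`v(t) ≥ c₄ t^β (log t)^{-(1+β)}` for all `t > t₁`. -/
theorem tauberian_lower_log (v : ℝ → ℝ) (α β : ℝ) (hβ : 0 < β) (hαβ : β < α)
    (hnonneg : ∀ t, 0 < t → 0 ≤ v t)
    (hmono : ∀ s t, 0 < s → s ≤ t → v s ≤ v t)
    (c₂ t₀ : ℝ) (ht₀ : 0 < t₀)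
    (hupper : ∀ t, t₀ < t → v t ≤ c₂ * t ^ α)
    (c₃ lam₀ : ℝ) (hc₃ : 0 < c₃) (hlam₀ : 0 < lam₀)
    (hLap : ∀ lam : ℝ, 0 < lam → lam < lam₀ →
      ENNReal.ofReal (c₃ * lam ^ (-(1 + β)))
        ≤ ∫⁻ t in Ioi (0 : ℝ), ENNReal.ofReal (Real.exp (-lam * t) * v t)) :
    ∃ c₄ t₁ : ℝ, 0 < c₄ ∧ ∀ t, t₁ < t →
      c₄ * t ^ β * Real.log t ^ (-(1 + β)) ≤ v t := by
  obtain ⟨lam₁, hlam₁pos, hlam₁half, hkey⟩ :=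
    key_est v α β hβ hαβ hnonneg hmono c₂ t₀ ht₀ hupper c₃ lam₀ hc₃ hlam₀ hLap
  have hα : 0 < α := hβ.trans hαβ
  set K := 2*(α+β+2) with hK
  have hKpos : (0:ℝ) < K := by rw [hK]; positivity
  have hK1 : (1:ℝ) ≤ K := by rw [hK]; nlinarith
  refine ⟨c₃/2 * K^(-β), max (Real.exp 1) ((2*K/lam₁)^2), by positivity, ?_⟩
  intro t ht
  have hte : Real.exp 1 < t := lt_of_le_of_lt (le_max_left _ _) ht
  have hsq : (2*K/lam₁)^2 < t := lt_of_le_of_lt (le_max_right _ _) ht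
  have ht1 : 0 < t := lt_trans (Real.exp_pos 1) hte
  have hlogt : 1 < Real.log t := (Real.lt_log_iff_exp_lt ht1).mpr hte
  set lam := K * Real.log t / t with hlamdef
  have hlampos : 0 < lam := by
    apply div_pos (mul_pos hKpos (by linarith)) ht1
  have hst : 0 < Real.sqrt t := Real.sqrt_pos.mpr ht1
  have hsqrtlog : Real.log t ≤ 2 * Real.sqrt t := by
    have h1 : Real.log (Real.sqrt t) ≤ Real.sqrt t - 1 := Real.log_le_sub_one_of_pos hst
    have h2 : Real.log (Real.sqrt t) = Real.log t / 2 := Real.log_sqrt ht1.le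
    linarith
  have hlamle : lam ≤ lam₁ := by
    have hmul : Real.sqrt t * Real.sqrt t = t := Real.mul_self_sqrt ht1.le
    have h1 : lam ≤ 2*K/Real.sqrt t := by
      rw [hlamdef, div_le_div_iff₀ ht1 hst]
      have h3 := mul_le_mul_of_nonneg_left hsqrtlog (mul_nonneg hKpos.le hst.le)
      nlinarith [h3, hmul]
    have hs2 : 2*K/lam₁ ≤ Real.sqrt t := by
      have := Real.sqrt_le_sqrt hsq.le
      rwa [Real.sqrt_sq (by positivity)] at this
    have h2 : 2*K/Real.sqrt t ≤ lam₁ := by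
      rw [div_le_iff₀ hst]
      rw [div_le_iff₀ hlam₁pos] at hs2
      linarith [mul_comm lam₁ (Real.sqrt t)]
    linarith
  have hklam := hkey lam hlampos hlamle
  have hlam1 : lam < 1 := by linarith [hlamle.trans hlam₁half]
  have hlogtne : Real.log t ≠ 0 := by linarith
  have hlaminv_eq : lam⁻¹ = t / (K * Real.log t) := by
    rw [hlamdef]; field_simp
  have hlaminvle : lam⁻¹ ≤ t := by
    rw [hlaminv_eq]
    apply div_le_self ht1.le
    nlinarith
  have hT0 : 0 < K/lam * Real.log lam⁻¹ := by
    apply mul_pos (div_pos hKpos hlampos)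
    rw [Real.log_inv]; linarith [Real.log_neg hlampos hlam1]
  have hTle : K/lam * Real.log lam⁻¹ ≤ t := by
    have hlog2 : Real.log lam⁻¹ ≤ Real.log t := Real.log_le_log (by positivity) hlaminvle
    have hKlam : K/lam = t / Real.log t := by
      rw [hlamdef]; field_simp
    rw [hKlam]
    calc t/Real.log t * Real.log lam⁻¹ ≤ t/Real.log t * Real.log t := by
          apply mul_le_mul_of_nonneg_left hlog2 (by positivity)
      _ = t := by field_simp
  have hvTt := hmono _ t hT0 hTle
  have hid : lam ^ (-β) = t^β * (K^β)⁻¹ * ((Real.log t)^β)⁻¹ := by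
    rw [Real.rpow_neg hlampos.le, ← Real.inv_rpow hlampos.le, hlaminv_eq,
      Real.div_rpow ht1.le (by positivity), Real.mul_rpow hKpos.le (by linarith)]
    field_simp
  calc c₃/2 * K^(-β) * t ^ β * Real.log t ^ (-(1+β))
      ≤ c₃/2 * K^(-β) * t ^ β * Real.log t ^ (-β) := by
        apply mul_le_mul_of_nonneg_left
          (Real.rpow_le_rpow_of_exponent_le hlogt.le (by linarith)) (by positivity)
    _ = c₃/2 * lam ^ (-β) := by
        rw [hid, Real.rpow_neg hKpos.le, Real.rpow_neg (by linarith : (0:ℝ) ≤ Real.log t)]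
        ring
    _ ≤ v (K/lam * Real.log lam⁻¹) := hklam
    _ ≤ v t := hvTt
end

section
/- Fix an integer k ≥ 1. There exists C < ∞ such that for every λ ∈ (0,1) there exist real constants c₁, c₂ with |c₁ − λ^{−1/2}| ≤ C and |c₂ − λ^{−1/2}| ≤ C such that the function h : ℕ → ℝ defined by h(x) = ½ (c₁ γ^{k−x} + c₂ γ^{x−k}) for 0 ≤ x < k and h(x) = ½ (c₁ + c₂) γ^{x−k} for x ≥ k satisfies λ h(x) − (𝒮h)(x) = 1 if x = k and λ h(x) − (𝒮h)(x) = 0 for all other x ∈ ℕ; that is, h solves (λ − 𝒮) h = δ_k. Here γ = ((λ+2) − √(λ² + 4λ))/2. -/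
/-!
The roots of `t² - (λ+2)t + 1` are `γ` and `γ⁻¹`, so on each side of `k` the function
`n ↦ a γ^{-n} + b γ^n` solves `λ h = 𝒮 h` away from the boundary. The choice `c₂ = c₁ γ^{2k+1}`
makes the left branch symmetric about `x = -1/2`, which is exactly the reflecting condition at `0`,
and `c₁ = 2 / (γ⁻¹ - γ) = 2 / √(λ² + 4λ)` makes the kink at `k` produce the unit mass.
Since `c₁ ≈ λ^{-1/2}` and `c₁ (1 - γ) ≤ 1`, Bernoulli's inequality gives `|c₂ - c₁| ≤ 2k + 1`.
-/

/-- The generator of the symmetric nearest-neighbor random walk on `ℕ` reflected at `0`. -/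
noncomputable def walkGen (f : ℕ → ℝ) : ℕ → ℝ :=
  fun x => if x = 0 then f 1 - f 0 else f (x + 1) + f (x - 1) - 2 * f x

/-- `γ = ((λ+2) - √(λ²+4λ))/2`, the root in `(0,1)` of `γ² - (λ+2)γ + 1 = 0`. -/
noncomputable def gam (lam : ℝ) : ℝ :=
  ((lam + 2) - Real.sqrt (lam ^ 2 + 4 * lam)) / 2

lemma gam_mul_eq_one {lam : ℝ} (hlam : 0 ≤ lam) :
    gam lam * (((lam + 2) + √(lam ^ 2 + 4 * lam)) / 2) = 1 := by
  have := Real.sq_sqrt (by positivity : 0 ≤ lam ^ 2 + 4 * lam)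
  unfold gam
  linear_combination -this / 4

lemma inv_gam {lam : ℝ} (hlam : 0 ≤ lam) :
    (gam lam)⁻¹ = ((lam + 2) + √(lam ^ 2 + 4 * lam)) / 2 :=
  inv_eq_of_mul_eq_one_right (gam_mul_eq_one hlam)

lemma gam_add_inv_gam {lam : ℝ} (hlam : 0 ≤ lam) : gam lam + (gam lam)⁻¹ = lam + 2 := by
  rw [inv_gam hlam, gam]; ring

lemma inv_gam_sub_gam {lam : ℝ} (hlam : 0 ≤ lam) :
    (gam lam)⁻¹ - gam lam = √(lam ^ 2 + 4 * lam) := by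
  rw [inv_gam hlam, gam]; ring

lemma gam_pos {lam : ℝ} (hlam : 0 ≤ lam) : 0 < gam lam := by
  have : √(lam ^ 2 + 4 * lam) < lam + 2 := (Real.sqrt_lt' (by linarith)).2 (by nlinarith)
  unfold gam; linarith

lemma gam_lt_one {lam : ℝ} (hlam : 0 < lam) : gam lam < 1 := by
  have : lam < √(lam ^ 2 + 4 * lam) := (Real.lt_sqrt hlam.le).2 (by nlinarith)
  unfold gam; linarith

lemma abs_div_sqrt_sub_rpow_le_one {lam : ℝ} (hlam : 0 < lam) (hlam₁ : lam ≤ 1) :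
    |2 / √(lam ^ 2 + 4 * lam) - lam ^ (-(1 / 2) : ℝ)| ≤ 1 := by
  set t := √lam with ht
  set u := √(lam + 4)
  have ht₀ : 0 < t := Real.sqrt_pos.2 hlam
  have ht₁ : t ≤ 1 := Real.sqrt_le_one.mpr hlam₁
  have hu : u ^ 2 = t ^ 2 + 4 := by
    rw [Real.sq_sqrt (by linarith), Real.sq_sqrt hlam.le]
  have hu₂ : 2 ≤ u := Real.le_sqrt_of_sq_le (by linarith)
  have hs : √(lam ^ 2 + 4 * lam) = t * u := by
    rw [← Real.sqrt_mul hlam.le]; ring_nf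
  have hrpow : lam ^ (-(1 / 2) : ℝ) = t⁻¹ := by
    rw [Real.rpow_neg hlam.le, ht, Real.sqrt_eq_rpow]
  have hdiff : t⁻¹ - 2 / (t * u) = (u - 2) / (t * u) := by field_simp
  rw [hs, hrpow, abs_sub_comm, hdiff, abs_of_nonneg (by positivity),
    div_le_one (by positivity)]
  nlinarith

lemma abs_mul_pow_sub_self_le {c γ : ℝ} (hc : 0 ≤ c) (hγ₀ : 0 ≤ γ) (hγ₁ : γ ≤ 1)
    (hcγ : c * (1 - γ) ≤ 1) (n : ℕ) : |c * γ ^ n - c| ≤ n := by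
  have hbern : 1 - γ ^ n ≤ n * (1 - γ) := by
    have := one_add_mul_le_pow (a := γ - 1) (by linarith) n
    rw [add_sub_cancel] at this
    linarith
  rw [abs_sub_comm, abs_of_nonneg (by nlinarith [pow_le_one₀ (n := n) hγ₀ hγ₁])]
  nlinarith [Nat.cast_nonneg (α := ℝ) n]

noncomputable def expCombo (a b γ : ℝ) (n : ℤ) : ℝ := a * γ ^ (-n) + b * γ ^ n

lemma expCombo_add_one_add_expCombo_sub_one {lam γ : ℝ} (hγ : γ ≠ 0) (hroot : γ + γ⁻¹ = lam + 2)
    (a b : ℝ) (n : ℤ) :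
    expCombo a b γ (n + 1) + expCombo a b γ (n - 1) = (lam + 2) * expCombo a b γ n := by
  simp only [expCombo, neg_add, neg_sub, zpow_add₀ hγ, zpow_sub₀ hγ, zpow_one, zpow_neg]
  rw [← hroot]
  field_simp
  ring

lemma expCombo_reflect (a γ : ℝ) (hγ : γ ≠ 0) (m : ℤ) :
    expCombo a (a * γ ^ (2 * m + 1)) γ (-m - 1) = expCombo a (a * γ ^ (2 * m + 1)) γ (-m) := by
  simp only [expCombo, mul_assoc, ← zpow_add₀ hγ]
  ring_nf

lemma walkGen_zero (f : ℕ → ℝ) : walkGen f 0 = f 1 - f 0 := by simp [walkGen]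

lemma walkGen_of_ne_zero (f : ℕ → ℝ) {x : ℕ} (hx : x ≠ 0) :
    walkGen f x = f (x + 1) + f (x - 1) - 2 * f x := by simp [walkGen, hx]

section ExpCombo

variable {lam γ a b : ℝ} {h : ℕ → ℝ} {n : ℤ}

lemma lam_mul_sub_walkGen_of_expCombo {d : ℝ} {x : ℕ} (hγ : γ ≠ 0)
    (hroot : γ + γ⁻¹ = lam + 2) (hx : x ≠ 0) (hprev : h (x - 1) = expCombo a b γ (n - 1))
    (hcur : h x = expCombo a b γ n) (hnext : h (x + 1) = expCombo a b γ (n + 1) - d) :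
    lam * h x - walkGen h x = d := by
  rw [walkGen_of_ne_zero h hx, hprev, hcur, hnext]
  linear_combination -expCombo_add_one_add_expCombo_sub_one hγ hroot a b n

lemma lam_mul_sub_walkGen_zero_of_expCombo (hγ : γ ≠ 0) (hroot : γ + γ⁻¹ = lam + 2)
    (hrefl : expCombo a b γ (n - 1) = expCombo a b γ n)
    (h₀ : h 0 = expCombo a b γ n) (h₁ : h 1 = expCombo a b γ (n + 1)) :
    lam * h 0 - walkGen h 0 = 0 := by
  rw [walkGen_zero, h₀, h₁]
  linear_combination -expCombo_add_one_add_expCombo_sub_one hγ hroot a b n + hrefl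

end ExpCombo

section Profile

variable {lam γ c₁ c₂ : ℝ} {k : ℕ} {h : ℕ → ℝ}
  (hh : ∀ x : ℕ, h x = if x < k then (c₁ * γ ^ ((k : ℤ) - x) + c₂ * γ ^ ((x : ℤ) - k)) / 2
    else ((c₁ + c₂) / 2) * γ ^ ((x : ℤ) - k))
include hh

lemma eq_expCombo_of_le {x : ℕ} (hx : x ≤ k) {n : ℤ} (hn : n = x - k) :
    h x = expCombo (c₁ / 2) (c₂ / 2) γ n := by
  rcases hx.lt_or_eq with hx | rfl
  · rw [hh, if_pos hx, expCombo, hn, neg_sub]; ring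
  · rw [hh, if_neg (lt_irrefl _), expCombo, hn, sub_self, neg_zero, zpow_zero]; ring

lemma eq_expCombo_of_ge {x : ℕ} (hx : k ≤ x) {n : ℤ} (hn : n = x - k) :
    h x = expCombo 0 ((c₁ + c₂) / 2) γ n := by
  rw [hh, if_neg (not_lt.2 hx), expCombo, hn]; ring

lemma lam_mul_sub_walkGen_profile (hk : 1 ≤ k) (hγ : γ ≠ 0) (hroot : γ + γ⁻¹ = lam + 2)
    (hc₁ : c₁ * (γ⁻¹ - γ) = 2) (hc₂ : c₂ = c₁ * γ ^ (2 * k + 1)) (x : ℕ) :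
    lam * h x - walkGen h x = if x = k then 1 else 0 := by
  rcases lt_trichotomy x k with hxk | rfl | hxk
  · rw [if_neg hxk.ne]
    rcases Nat.eq_zero_or_pos x with rfl | hx
    · have hb : c₂ / 2 = c₁ / 2 * γ ^ (2 * (k : ℤ) + 1) := by
        rw [hc₂, ← zpow_natCast]; push_cast; ring
      refine lam_mul_sub_walkGen_zero_of_expCombo (n := -k) hγ hroot ?_
        (eq_expCombo_of_le hh hxk.le (by simp)) (eq_expCombo_of_le hh hk (by push_cast; ring))
      rw [hb]; exact expCombo_reflect _ _ hγ k
    · exact lam_mul_sub_walkGen_of_expCombo (n := x - k) hγ hroot hx.ne'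
        (eq_expCombo_of_le hh (by omega) (by omega)) (eq_expCombo_of_le hh hxk.le rfl)
        (by rw [sub_zero]; exact eq_expCombo_of_le hh hxk (by push_cast; ring))
  · rw [if_pos rfl]
    refine lam_mul_sub_walkGen_of_expCombo (n := 0) hγ hroot (by omega)
      (eq_expCombo_of_le hh (by omega) (by omega)) (eq_expCombo_of_le hh le_rfl (by simp)) ?_
    rw [eq_expCombo_of_ge hh (by omega) (n := 1) (by push_cast; ring)]
    simp only [expCombo, zpow_neg, zpow_one, zero_add]
    linear_combination -hc₁ / 2
  · rw [if_neg hxk.ne']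
    exact lam_mul_sub_walkGen_of_expCombo (n := x - k) hγ hroot (by omega)
      (eq_expCombo_of_ge hh (by omega) (by omega)) (eq_expCombo_of_ge hh hxk.le rfl)
      (by rw [sub_zero]; exact eq_expCombo_of_ge hh (by omega) (by push_cast; ring))

end Profile

/-- For each `k ≥ 1` there is `C < ∞` such that for every `λ ∈ (0,1)` there are constants
`c₁, c₂` with `|cᵢ - λ^{-1/2}| ≤ C` for which the function
`h(x) = ½(c₁ γ^{k-x} + c₂ γ^{x-k})` for `x < k`, `h(x) = ½(c₁+c₂) γ^{x-k}` for `x ≥ k`,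
solves the resolvent equation `(λ - 𝒮)h = δ_k`. -/
theorem resolvent_delta_k (k : ℕ) (hk : 1 ≤ k) :
    ∃ C : ℝ, ∀ lam : ℝ, lam ∈ Set.Ioo (0 : ℝ) 1 →
      ∃ c₁ c₂ : ℝ, |c₁ - lam ^ (-(1 / 2) : ℝ)| ≤ C ∧ |c₂ - lam ^ (-(1 / 2) : ℝ)| ≤ C ∧
        ∀ h : ℕ → ℝ,
          (∀ x : ℕ, h x =
            if x < k then
              (c₁ * gam lam ^ ((k : ℤ) - (x : ℤ)) + c₂ * gam lam ^ ((x : ℤ) - (k : ℤ))) / 2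
            else ((c₁ + c₂) / 2) * gam lam ^ ((x : ℤ) - (k : ℤ))) →
          lam * h k - walkGen h k = 1 ∧
            ∀ x : ℕ, x ≠ k → lam * h x - walkGen h x = 0 := by
  refine ⟨2 * k + 2, fun lam ⟨hlam₀, hlam₁⟩ => ?_⟩
  set γ := gam lam
  set c₁ := 2 / √(lam ^ 2 + 4 * lam)
  have hγ₀ : 0 < γ := gam_pos hlam₀.le
  have hγ₁ : γ < 1 := gam_lt_one hlam₀
  have hc₁ : c₁ * (γ⁻¹ - γ) = 2 := by
    rw [inv_gam_sub_gam hlam₀.le]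
    exact div_mul_cancel₀ _ (Real.sqrt_pos.2 (by positivity)).ne'
  have hc₁γ : c₁ * (1 - γ) ≤ 1 := by
    have : c₁ * (1 - γ) * (1 + γ) = 2 * γ := by rw [← hc₁]; field_simp; ring
    nlinarith
  have hc₁_near := abs_div_sqrt_sub_rpow_le_one hlam₀ hlam₁.le
  have hc₂_near := abs_mul_pow_sub_self_le (by positivity) hγ₀.le hγ₁.le hc₁γ (2 * k + 1)
  refine ⟨c₁, c₁ * γ ^ (2 * k + 1), by linarith, ?_, fun h hh => ?_⟩
  · calc _ ≤ |c₁ * γ ^ (2 * k + 1) - c₁| + |c₁ - lam ^ (-(1 / 2) : ℝ)| := abs_sub_le _ _ _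
      _ ≤ 2 * k + 2 := by push_cast at hc₂_near; linarith
  have key := lam_mul_sub_walkGen_profile hh hk hγ₀.ne' (gam_add_inv_gam hlam₀.le) hc₁ rfl
  exact ⟨by simpa using key k, fun x hx => by simpa [hx] using key x⟩
end

section
/- Fix an integer k ≥ 1. There exists C < ∞ such that for every λ ∈ (0,1): (i) there exists a function h : ℕ → ℝ with h(x) → 0 as x → ∞ satisfying λ h(x) − (𝒮h)(x) = 1_{x=0} − 1_{x=k} for all x ∈ ℕ; and (ii) every such function satisfies |h(0) − h(k)| ≤ C, with the bound C uniform over λ ∈ (0,1). -/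
open Filter

/-!
Let `r ∈ (0,1)` solve `r + r⁻¹ = 2 + λ`, so that `λ r^n − (r^(n+1) + r^(n-1) − 2 r^n) = 0`.
The resolvent kernel of the reflected walk is then explicit,
`G_y(x) = r/(1−r²) · (r^|x−y| + r^(x+y+1))`, the second term being the mirror image of the
first in the reflecting barrier at `−1/2`. Hence `h = G_0 − G_k` is a decaying solution, and
`h(0) − h(k) = (1 − r^k)/(1 − r) · r(2 + r − r^(k+1))/(1 + r) ≤ 2k` by Bernoulli's inequality.
Any other decaying solution differs from `h` by a decaying solution of `λ d = 𝒮 d`, which vanishes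
by the maximum principle: at a positive maximum of `d`, `𝒮 d ≤ 0 < λ d`.
-/

open Topology

lemma walkGen_sub (f g : ℕ → ℝ) : walkGen (f - g) = walkGen f - walkGen g := by
  ext x
  simp only [walkGen, Pi.sub_apply]
  split_ifs <;> ring

lemma walkGen_nonpos_of_forall_le {f : ℕ → ℝ} {x : ℕ} (hx : ∀ y, f y ≤ f x) :
    walkGen f x ≤ 0 := by
  unfold walkGen
  split_ifs with h0
  · linarith [h0 ▸ hx 1]
  · linarith [hx (x + 1), hx (x - 1)]

section MaximumPrinciple

variable {lam : ℝ}

lemma nonpos_of_resolvent_nonpos (hlam : 0 < lam) {f : ℕ → ℝ} (hf : Tendsto f atTop (𝓝 0))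
    (hres : ∀ x, lam * f x - walkGen f x ≤ 0) (x : ℕ) : f x ≤ 0 := by
  by_contra! hpos
  obtain ⟨x₀, hx₀⟩ : ∃ x₀, ∀ y, f y ≤ f x₀ :=
    continuous_of_discreteTopology.exists_forall_ge' x <| by
      rw [cocompact_eq_atTop]
      exact hf.eventually (ge_mem_nhds hpos)
  nlinarith [hres x₀, walkGen_nonpos_of_forall_le hx₀, hx₀ x]

lemma le_of_resolvent_le (hlam : 0 < lam) {f g : ℕ → ℝ} (hf : Tendsto f atTop (𝓝 0))
    (hg : Tendsto g atTop (𝓝 0))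
    (hfg : ∀ x, lam * f x - walkGen f x ≤ lam * g x - walkGen g x) : f ≤ g := by
  intro x
  have hlim : Tendsto (f - g) atTop (𝓝 0) := by
    rw [← sub_self 0]
    exact hf.sub hg
  refine sub_nonpos.mp (nonpos_of_resolvent_nonpos hlam hlim (fun y => ?_) x)
  simp only [walkGen_sub, Pi.sub_apply]
  linarith [hfg y]

lemma eq_of_resolvent_eq (hlam : 0 < lam) {f g : ℕ → ℝ} (hf : Tendsto f atTop (𝓝 0))
    (hg : Tendsto g atTop (𝓝 0))
    (hfg : ∀ x, lam * f x - walkGen f x = lam * g x - walkGen g x) : f = g :=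
  le_antisymm (le_of_resolvent_le hlam hf hg fun x => (hfg x).le)
    (le_of_resolvent_le hlam hg hf fun x => (hfg x).ge)

end MaximumPrinciple

lemma exists_resolvent_root {lam : ℝ} (hlam : 0 < lam) :
    ∃ r, 0 < r ∧ r < 1 ∧ lam * r = (1 - r) ^ 2 := by
  have hcont : ContinuousOn (fun r : ℝ => (1 - r) ^ 2 - lam * r) (Set.Icc 0 1) := by fun_prop
  have hzero : (0 : ℝ) ∈ Set.Ioo ((1 - 1) ^ 2 - lam * 1) ((1 - 0) ^ 2 - lam * 0) := by
    constructor <;> norm_num [hlam]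
  obtain ⟨r, ⟨hr0, hr1⟩, hr⟩ := intermediate_value_Ioo' zero_le_one hcont hzero
  exact ⟨r, hr0, hr1, by linarith [show (1 - r) ^ 2 - lam * r = 0 from hr]⟩

noncomputable def greenFn (r : ℝ) (y x : ℕ) : ℝ :=
  r / (1 - r ^ 2) * (r ^ Nat.dist x y + r ^ (x + y + 1))

lemma greenFn_resolvent {lam r : ℝ} (hr0 : 0 < r) (hr1 : r < 1) (hroot : lam * r = (1 - r) ^ 2)
    (y x : ℕ) :
    lam * greenFn r y x - walkGen (greenFn r y) x = if x = y then 1 else 0 := by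
  have hr2 : 1 - r ^ 2 ≠ 0 := by nlinarith
  obtain rfl : lam = (1 - r) ^ 2 / r := by field_simp; linarith
  rcases x with _ | x
  · simp only [walkGen, greenFn, ↓reduceIte]
    rcases y with _ | y
    · rw [if_pos rfl, Nat.dist_self, show Nat.dist 1 0 = 1 from rfl]
      field_simp
      ring
    · obtain ⟨h₀, h₁⟩ : Nat.dist 0 (y + 1) = y + 1 ∧ Nat.dist 1 (y + 1) = y := by
        simp only [Nat.dist]; omega
      rw [if_neg (Nat.succ_ne_zero y).symm, h₀, h₁]
      field_simp
      ring
  · simp only [walkGen, greenFn, add_tsub_cancel_right, Nat.add_one_ne_zero, if_false]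
    rcases lt_trichotomy (x + 1) y with hxy | rfl | hxy
    · obtain ⟨e, h₀, h₁, h₂⟩ : ∃ e, Nat.dist x y = e + 2 ∧ Nat.dist (x + 1) y = e + 1 ∧
          Nat.dist (x + 1 + 1) y = e := ⟨y - x - 2, by simp only [Nat.dist]; omega⟩
      rw [if_neg hxy.ne, h₀, h₁, h₂]
      field_simp
      ring
    · obtain ⟨h₀, h₁, h₂⟩ : Nat.dist x (x + 1) = 1 ∧ Nat.dist (x + 1) (x + 1) = 0 ∧
          Nat.dist (x + 1 + 1) (x + 1) = 1 := by simp only [Nat.dist]; omega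
      rw [if_pos rfl, h₀, h₁, h₂]
      field_simp
      ring
    · obtain ⟨e, h₀, h₁, h₂⟩ : ∃ e, Nat.dist x y = e ∧ Nat.dist (x + 1) y = e + 1 ∧
          Nat.dist (x + 1 + 1) y = e + 2 := ⟨x - y, by simp only [Nat.dist]; omega⟩
      rw [if_neg hxy.ne', h₀, h₁, h₂]
      field_simp
      ring

lemma tendsto_greenFn {r : ℝ} (hr0 : 0 ≤ r) (hr1 : r < 1) (y : ℕ) :
    Tendsto (greenFn r y) atTop (𝓝 0) := by
  have hdist : Tendsto (fun x => Nat.dist x y) atTop atTop :=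
    tendsto_atTop_mono (fun x => by unfold Nat.dist; omega) (tendsto_sub_atTop_nat y)
  have hpow := tendsto_pow_atTop_nhds_zero_of_lt_one hr0 hr1
  have := ((hpow.comp hdist).add (hpow.comp (tendsto_add_atTop_nat (y + 1)))).const_mul
    (r / (1 - r ^ 2))
  rwa [add_zero, mul_zero] at this

lemma one_sub_pow_div_one_sub_le {r : ℝ} (hr0 : -1 ≤ r) (hr1 : r < 1) (k : ℕ) :
    (1 - r ^ k) / (1 - r) ≤ k := by
  rw [div_le_iff₀ (by linarith)]
  nlinarith [one_add_mul_sub_le_pow hr0 k]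

lemma abs_greenFn_sub_greenFn_le {r : ℝ} (hr0 : 0 < r) (hr1 : r < 1) (k : ℕ) :
    |(greenFn r 0 - greenFn r k) 0 - (greenFn r 0 - greenFn r k) k| ≤ 2 * k := by
  have hrk : r ^ k ≤ 1 := pow_le_one₀ hr0.le hr1.le
  have hrk' : r ^ (k + 1) ≤ 1 := pow_le_one₀ hr0.le hr1.le
  have hsplit : (greenFn r 0 - greenFn r k) 0 - (greenFn r 0 - greenFn r k) k =
      (1 - r ^ k) / (1 - r) * (r * (2 + r - r ^ (k + 1)) / (1 + r)) := by
    have : 1 - r ≠ 0 := by linarith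
    have : 1 + r ≠ 0 := by linarith
    simp only [Pi.sub_apply, greenFn, Nat.dist_self, Nat.dist_zero_left, Nat.dist_zero_right,
      show (1 : ℝ) - r ^ 2 = (1 - r) * (1 + r) by ring]
    field_simp
    ring
  have hfirst : 0 ≤ (1 - r ^ k) / (1 - r) := div_nonneg (by linarith) (by linarith)
  have hsecond : 0 ≤ r * (2 + r - r ^ (k + 1)) / (1 + r) := by
    apply div_nonneg _ (by linarith)
    nlinarith
  have hsecond' : r * (2 + r - r ^ (k + 1)) / (1 + r) ≤ 2 := by
    rw [div_le_iff₀ (by linarith)]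
    nlinarith [pow_nonneg hr0.le (k + 1)]
  rw [hsplit, abs_of_nonneg (mul_nonneg hfirst hsecond), mul_comm 2]
  exact mul_le_mul (one_sub_pow_div_one_sub_le (by linarith) hr1 k) hsecond' hsecond
    (Nat.cast_nonneg k)

theorem resolvent_difference_bounded_general (k : ℕ) :
    ∃ C : ℝ, ∀ lam : ℝ, lam ∈ Set.Ioo (0 : ℝ) 1 →
      (∃ h : ℕ → ℝ, Tendsto h atTop (nhds 0) ∧
        ∀ x : ℕ, lam * h x - walkGen h x =
          (if x = 0 then (1 : ℝ) else 0) - (if x = k then (1 : ℝ) else 0)) ∧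
      (∀ h : ℕ → ℝ, Tendsto h atTop (nhds 0) →
        (∀ x : ℕ, lam * h x - walkGen h x =
          (if x = 0 then (1 : ℝ) else 0) - (if x = k then (1 : ℝ) else 0)) →
        |h 0 - h k| ≤ C) := by
  refine ⟨2 * k, fun lam ⟨hlam, _⟩ => ?_⟩
  obtain ⟨r, hr0, hr1, hroot⟩ := exists_resolvent_root hlam
  have hsol : ∀ x, lam * (greenFn r 0 - greenFn r k) x - walkGen (greenFn r 0 - greenFn r k) x =
      (if x = 0 then (1 : ℝ) else 0) - (if x = k then (1 : ℝ) else 0) := fun x => by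
    rw [← greenFn_resolvent hr0 hr1 hroot 0 x, ← greenFn_resolvent hr0 hr1 hroot k x,
      walkGen_sub, Pi.sub_apply, Pi.sub_apply]
    ring
  have hlim : Tendsto (greenFn r 0 - greenFn r k) atTop (𝓝 0) := by
    rw [← sub_self 0]
    exact (tendsto_greenFn hr0.le hr1 0).sub (tendsto_greenFn hr0.le hr1 k)
  refine ⟨⟨_, hlim, hsol⟩, fun h hh hsolh => ?_⟩
  obtain rfl := eq_of_resolvent_eq hlam hh hlim fun x => (hsolh x).trans (hsol x).symm
  exact abs_greenFn_sub_greenFn_le hr0 hr1 k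

/-- For each `k ≥ 1` there is a constant `C < ∞`, uniform over `λ ∈ (0,1)`, such that:
(i) there exists `h : ℕ → ℝ` vanishing at infinity with `(λ - 𝒮)h = δ₀ - δ_k`, and
(ii) every such `h` satisfies `|h(0) - h(k)| ≤ C`. -/
theorem resolvent_difference_bounded (k : ℕ) (hk : 1 ≤ k) :
    ∃ C : ℝ, ∀ lam : ℝ, lam ∈ Set.Ioo (0 : ℝ) 1 →
      (∃ h : ℕ → ℝ, Tendsto h atTop (nhds 0) ∧
        ∀ x : ℕ, lam * h x - walkGen h x =
          (if x = 0 then (1 : ℝ) else 0) - (if x = k then (1 : ℝ) else 0)) ∧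
      (∀ h : ℕ → ℝ, Tendsto h atTop (nhds 0) →
        (∀ x : ℕ, lam * h x - walkGen h x =
          (if x = 0 then (1 : ℝ) else 0) - (if x = k then (1 : ℝ) else 0)) →
        |h 0 - h k| ≤ C) :=
  resolvent_difference_bounded_general k
end

section
/- Let K ∈ ℝ, m ∈ ℤ, and let v : ℤ → ℝ be such that there exist C < ∞ and c > 0 with |v(x) − K·|x − m|| ≤ C e^{−c|x|} for all x ∈ ℤ. Define S(x) = (v(x+1) − 2 v(x) + v(x−1))/8. Then the series ∑_{x∈ℤ} |x − m|·S(x) converges absolutely and ∑_{x∈ℤ} |x − m|·S(x) = v(m)/4. -/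
/-!
Write `v = K·|x - m| + w`, where `w` decays exponentially. The second difference of the tent
`|x - m|` is `2δ_m`, which the weight `|x - m|` annihilates, so only `w` contributes. Shifting
the summation index moves the second difference from `w` onto the weight `|x - m|`, whose
second difference is again `2δ_m`; the sum is therefore `2 w(m) / 8 = v(m) / 4`.
-/

open Real

theorem summable_abs_pow_mul_exp_neg_abs (k : ℕ) {c : ℝ} (hc : 0 < c) :
    Summable fun x : ℤ => |(x : ℝ)| ^ k * exp (-c * |(x : ℝ)|) := by
  have h := summable_pow_mul_exp_neg_nat_mul k hc
  exact .of_nat_of_neg (by simpa using h) (by simpa using h)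

theorem summable_mul_of_abs_le_linear_of_abs_le_exp {a w : ℤ → ℝ} {A B C c : ℝ} (hc : 0 < c)
    (ha : ∀ x, |a x| ≤ A * |(x : ℝ)| + B) (hw : ∀ x, |w x| ≤ C * exp (-c * |(x : ℝ)|)) :
    Summable fun x => a x * w x := by
  have hg : Summable fun x : ℤ => (A * C) * (|(x : ℝ)| ^ 1 * exp (-c * |(x : ℝ)|))
      + (B * C) * (|(x : ℝ)| ^ 0 * exp (-c * |(x : ℝ)|)) :=
    ((summable_abs_pow_mul_exp_neg_abs 1 hc).mul_left _).add
      ((summable_abs_pow_mul_exp_neg_abs 0 hc).mul_left _)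
  refine hg.of_norm_bounded fun x => ?_
  calc ‖a x * w x‖ = |a x| * |w x| := abs_mul _ _
    _ ≤ (A * |(x : ℝ)| + B) * (C * exp (-c * |(x : ℝ)|)) :=
      mul_le_mul (ha x) (hw x) (abs_nonneg _) ((abs_nonneg _).trans (ha x))
    _ = _ := by ring

theorem abs_sub_second_diff_eq_ite (m x : ℤ) :
    |((x - 1 : ℤ) : ℝ) - m| - 2 * |(x : ℝ) - m| + |((x + 1 : ℤ) : ℝ) - m|
      = if x = m then 2 else 0 := by
  have h : |x - 1 - m| - 2 * |x - m| + |x + 1 - m| = if x = m then 2 else 0 := by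
    simp only [abs_eq_max_neg]; split_ifs <;> omega
  exact_mod_cast h

theorem hasSum_mul_second_diff {a w : ℤ → ℝ} (hprev : Summable fun x => a (x - 1) * w x)
    (hcur : Summable fun x => a x * w x) (hnext : Summable fun x => a (x + 1) * w x) :
    HasSum (fun x => a x * (w (x + 1) - 2 * w x + w (x - 1)))
      (∑' x, (a (x - 1) - 2 * a x + a (x + 1)) * w x) := by
  have hshift_next : HasSum (fun x => a x * w (x + 1)) (∑' x, a (x - 1) * w x) := by
    simpa [Function.comp_def] using (Equiv.addRight (1 : ℤ)).hasSum_iff.mpr hprev.hasSum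
  have hshift_prev : HasSum (fun x => a x * w (x - 1)) (∑' x, a (x + 1) * w x) := by
    simpa [Function.comp_def] using (Equiv.subRight (1 : ℤ)).hasSum_iff.mpr hnext.hasSum
  have hval : ∑' x, (a (x - 1) - 2 * a x + a (x + 1)) * w x
      = ∑' x, a (x - 1) * w x - 2 * ∑' x, a x * w x + ∑' x, a (x + 1) * w x := by
    rw [← ((hprev.hasSum.sub (hcur.hasSum.mul_left 2)).add hnext.hasSum).tsum_eq]
    congr 1; ext x; ring
  have hterm : (fun x => a x * (w (x + 1) - 2 * w x + w (x - 1)))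
      = fun x => a x * w (x + 1) - 2 * (a x * w x) + a x * w (x - 1) := by
    ext x; ring
  rw [hval, hterm]
  exact (hshift_next.sub (hcur.hasSum.mul_left 2)).add hshift_prev

theorem summable_abs_sub_mul_of_abs_le_exp {w : ℤ → ℝ} {C c : ℝ} (hc : 0 < c)
    (hw : ∀ x, |w x| ≤ C * exp (-c * |(x : ℝ)|)) (m : ℤ) {s : ℤ → ℤ} (hs : ∀ x, |s x - x| ≤ 1) :
    Summable fun x => |(s x : ℝ) - m| * w x := by
  refine summable_mul_of_abs_le_linear_of_abs_le_exp (A := 1) (B := |(m : ℝ)| + 1) hc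
    (fun x => ?_) hw
  have hsx : |((s x - x : ℤ) : ℝ)| ≤ 1 := by exact_mod_cast hs x
  push_cast at hsx
  rw [abs_le] at hsx
  rw [abs_abs, abs_le]
  constructor <;> linarith [le_abs_self (x : ℝ), neg_abs_le (x : ℝ), le_abs_self (m : ℝ),
    neg_abs_le (m : ℝ)]

/-- Discrete summation by parts, first absolute moment: if `v : ℤ → ℝ` differs from the
tent function `K·|x - m|` by an exponentially small perturbation, and
`S(x) = (v(x+1) - 2v(x) + v(x-1))/8`, then `∑_x |x - m|·S(x)` converges absolutely
and equals `v(m)/4`. -/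
theorem abs_moment_of_second_difference (K : ℝ) (m : ℤ) (v : ℤ → ℝ)
    (C c : ℝ) (hc : 0 < c)
    (hv : ∀ x : ℤ, abs (v x - K * |(x : ℝ) - (m : ℝ)|) ≤ C * Real.exp (-c * |(x : ℝ)|))
    (S : ℤ → ℝ) (hS : ∀ x : ℤ, S x = (v (x + 1) - 2 * v x + v (x - 1)) / 8) :
    Summable (fun x : ℤ => |(x : ℝ) - (m : ℝ)| * S x) ∧
      ∑' x : ℤ, |(x : ℝ) - (m : ℝ)| * S x = v m / 4 := by
  set w : ℤ → ℝ := fun x => v x - K * |(x : ℝ) - m|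
  have hmoment {s : ℤ → ℤ} (hs : ∀ x, |s x - x| ≤ 1) :=
    summable_abs_sub_mul_of_abs_le_exp hc hv m hs
  have hw := hasSum_mul_second_diff (a := fun x => |(x : ℝ) - m|) (w := w)
    (hmoment (s := (· - 1)) (by simp)) (hmoment (s := id) (by simp))
    (hmoment (s := (· + 1)) (by simp))
  simp only [abs_sub_second_diff_eq_ite, ite_mul, zero_mul, tsum_ite_eq] at hw
  have hS' : ∀ x : ℤ,
      |(x : ℝ) - m| * S x = |(x : ℝ) - m| * (w (x + 1) - 2 * w x + w (x - 1)) / 8 := by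
    intro x
    have htent := abs_sub_second_diff_eq_ite m x
    rw [hS]
    split_ifs at htent with hx
    · simp [hx]
    · simp only [w]
      linear_combination (|(x : ℝ) - m| * K / 8) * htent
  have hsum : HasSum (fun x : ℤ => |(x : ℝ) - m| * S x) (v m / 4) := by
    have hwm : w m = v m := by simp [w]
    rw [funext hS', show v m / 4 = 2 * w m / 8 by rw [hwm]; ring]
    exact hw.div_const 8
  exact ⟨hsum.summable, hsum.tsum_eq⟩
end
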